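/- For every integer k ≥ 2, the line with k origins L_k^♯ is not a contractible space. -/

import Mathlib

/-- The gluing relation on `Fin k × ℝ`: `(i,x) ∼ (j,y)` iff `x = y` and
(`x ≠ 0` or `i = j`), i.e. all non-zero points are glued and the origins stay apart. -/
def lineSetoid (k : ℕ) : Setoid (Fin k × ℝ) where
  r p q := p.2 = q.2 ∧ (p.2 ≠ 0 ∨ p.1 = q.1)
  iseqv := by
    constructor
    · exact fun p => ⟨rfl, Or.inr rfl⟩
    · rintro p q ⟨h1, h2⟩
      refine ⟨h1.symm, ?_⟩
      rcases h2 with h | h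
      · exact Or.inl (h1 ▸ h)
      · exact Or.inr h.symm
    · rintro p q r ⟨h1, h2⟩ ⟨h3, h4⟩
      refine ⟨h1.trans h3, ?_⟩
      rcases h2 with h | h
      · exact Or.inl h
      · rcases h4 with h' | h'
        · exact Or.inl (h1.symm ▸ h')
        · exact Or.inr (h.trans h')

/-- The line with `k` (inseparable) origins `L_k^♯`, as a quotient of `Fin k × ℝ`
equipped with the quotient topology. -/
def LineK (k : ℕ) : Type := Quotient (lineSetoid k)

instance (k : ℕ) : TopologicalSpace (LineK k) :=
  inferInstanceAs (TopologicalSpace (Quotient (lineSetoid k)))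

/-- `[x]_i`, the class of the point `x` on the `i`-th copy of `ℝ`. -/
def LineK.mk (k : ℕ) (i : Fin k) (x : ℝ) : LineK k := Quotient.mk (lineSetoid k) (i, x)

/-- The `i`-th origin `o_i = [0]_i`. -/
def LineK.origin (k : ℕ) (i : Fin k) : LineK k := LineK.mk k i 0

/-- The canonical projection `p : L_k^♯ → ℝ`, `[x]_i ↦ x`. -/
def LineK.proj (k : ℕ) : LineK k → ℝ :=
  Quotient.lift (fun p => p.2) (fun _ _ h => h.1)

/-!
If `L_k^♯` were contractible, the paths `t ↦ [2t - 1]_i` along two different sheets `i ≠ j` would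
be homotopic relative to their endpoints, through some `F : I × I → L_k^♯`. The projection `p ∘ F`
is the real part of a map `Φ : I × I → ℂ ∖ {0}` whose imaginary part is `u (1 - (p ∘ F)²)`, where
`u` is an Urysohn function equal to `1` on `F⁻¹ {o_i}` and to `-1` on the preimage of the other
origins (closed sets, since `L_k^♯` is T1). Then `Φ` is a homotopy relative to the endpoints from a
path `-1 ⇝ 1` crossing the imaginary axis only at `i` to one crossing it only at `-i`, which is
impossible since their lifts through `exp` end at different points.
-/

namespace IsCoveringMap

variable {E X : Type*} [TopologicalSpace E] [TopologicalSpace X] {p : E → X}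

theorem apply_one_eq_of_homotopicRel (cov : IsCoveringMap p) {γ₀ γ₁ : C(unitInterval, X)}
    (h : γ₀.HomotopicRel γ₁ {0, 1}) {Γ₀ Γ₁ : C(unitInterval, E)} (h₀ : p ∘ Γ₀ = γ₀)
    (h₁ : p ∘ Γ₁ = γ₁) (h01 : Γ₀ 0 = Γ₁ 0) : Γ₀ 1 = Γ₁ 1 := by
  have e₀ : γ₀ 0 = p (Γ₀ 0) := by rw [← h₀]; rfl
  have e₁ : γ₁ 0 = p (Γ₀ 0) := by rw [h01, ← h₁]; rfl
  rw [(cov.eq_liftPath_iff' e₀).2 ⟨h₀, rfl⟩, (cov.eq_liftPath_iff' e₁).2 ⟨h₁, h01.symm⟩]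
  exact cov.liftPath_apply_one_eq_of_homotopicRel h _ e₀ e₁

end IsCoveringMap

theorem ContinuousMap.homotopicRel_curry {X Y : Type*} [TopologicalSpace X] [TopologicalSpace Y]
    (Φ : C(unitInterval × X, Y)) {S : Set X} (h : ∀ t, ∀ x ∈ S, Φ (t, x) = Φ (0, x)) :
    (Φ.curry 0).HomotopicRel (Φ.curry 1) S :=
  ⟨{ toContinuousMap := Φ
     map_zero_left := fun _ => rfl
     map_one_left := fun _ => rfl
     prop' := h }⟩

namespace Complex

open Real in
/-- The lifts through `exp` starting at `πi` are branches of the logarithm, with cuts along the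
imaginary half-axis the path avoids, and they end at `0` and at `2πi`. -/
theorem not_homotopicRel_of_im_pos_of_im_neg {α β : C(unitInterval, {z : ℂ // z ≠ 0})}
    (hα₀ : (α 0 : ℂ) = -1) (hα₁ : (α 1 : ℂ) = 1)
    (hα : ∀ t, (α t : ℂ).re = 0 → 0 < (α t : ℂ).im)
    (hβ : ∀ t, (β t : ℂ).re = 0 → (β t : ℂ).im < 0) :
    ¬ α.HomotopicRel β {0, 1} := by
  intro h
  have hβ₀ : (β 0 : ℂ) = -1 := by rw [← h.some.fst_eq_snd (by simp), hα₀]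
  have hβ₁ : (β 1 : ℂ) = 1 := by rw [← h.some.fst_eq_snd (by simp), hα₁]
  have hα_slit : ∀ t, -I * α t ∈ slitPlane := fun t => by
    simpa [mem_slitPlane_iff, or_iff_not_imp_right] using hα t
  have hβ_slit : ∀ t, I * β t ∈ slitPlane := fun t => by
    simpa [mem_slitPlane_iff, or_iff_not_imp_right] using hβ t
  let Γ₀ : C(unitInterval, ℂ) := ⟨fun t => log (-I * α t) + π / 2 * I,
    ((by fun_prop : Continuous fun t => -I * (α t : ℂ)).clog hα_slit).add continuous_const⟩
  let Γ₁ : C(unitInterval, ℂ) := ⟨fun t => log (I * β t) - π / 2 * I + 2 * π * I,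
    (((by fun_prop : Continuous fun t => I * (β t : ℂ)).clog hβ_slit).sub continuous_const).add
      continuous_const⟩
  have hlift₀ : (fun z => ⟨exp z, exp_ne_zero z⟩ : ℂ → {z : ℂ // z ≠ 0}) ∘ Γ₀ = α := by
    ext t
    change exp (log (-I * α t) + π / 2 * I) = α t
    rw [exp_add, exp_log (mul_ne_zero (neg_ne_zero.2 I_ne_zero) (α t).2), exp_pi_div_two_mul_I]
    linear_combination (-(α t : ℂ)) * I_sq
  have hlift₁ : (fun z => ⟨exp z, exp_ne_zero z⟩ : ℂ → {z : ℂ // z ≠ 0}) ∘ Γ₁ = β := by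
    ext t
    change exp (log (I * β t) - π / 2 * I + 2 * π * I) = β t
    rw [exp_add, exp_sub, exp_log (mul_ne_zero I_ne_zero (β t).2), exp_pi_div_two_mul_I,
      exp_two_pi_mul_I, mul_one, mul_div_cancel_left₀ _ I_ne_zero]
  have h01 : Γ₀ 1 = Γ₁ 1 := isCoveringMap_exp.apply_one_eq_of_homotopicRel h hlift₀ hlift₁ <| by
    change log (-I * α 0) + π / 2 * I = log (I * β 0) - π / 2 * I + 2 * π * I
    rw [hα₀, hβ₀, mul_neg_one, mul_neg_one, neg_neg, log_I, log_neg_I]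
    ring
  change log (-I * α 1) + π / 2 * I = log (I * β 1) - π / 2 * I + 2 * π * I at h01
  rw [hα₁, hβ₁, mul_one, mul_one, log_I, log_neg_I] at h01
  have : (2 * π : ℂ) * I = 0 := by linear_combination -h01
  simp [pi_ne_zero, I_ne_zero] at this

end Complex

namespace LineK

open unitInterval

variable {k : ℕ}

theorem continuous_mk (i : Fin k) : Continuous (LineK.mk k i) :=
  continuous_quotient_mk'.comp (Continuous.prodMk_right i)

theorem continuous_proj : Continuous (LineK.proj k) :=
  continuous_quot_lift _ continuous_snd

@[simp]
theorem proj_mk (i : Fin k) (x : ℝ) : LineK.proj k (LineK.mk k i x) = x := rfl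

theorem mk_eq_mk (i j : Fin k) {x : ℝ} (hx : x ≠ 0) : LineK.mk k i x = LineK.mk k j x :=
  Quotient.sound ⟨rfl, Or.inl hx⟩

theorem origin_injective : Function.Injective (LineK.origin k) := fun _ _ h =>
  (Quotient.exact h).2.resolve_left (not_not.2 rfl)

theorem proj_eq_zero_iff {y : LineK k} : LineK.proj k y = 0 ↔ ∃ i, y = LineK.origin k i := by
  induction y using Quotient.ind with
  | _ p =>
    refine ⟨fun h => ⟨p.1, ?_⟩, fun ⟨i, hi⟩ => hi ▸ rfl⟩
    change LineK.mk k p.1 p.2 = LineK.mk k p.1 0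
    rw [← h]
    rfl

-- each class of the gluing relation is finite
instance : T1Space (LineK k) where
  t1 y := by
    induction y using Quotient.ind with
    | _ p =>
      refine (isQuotientMap_quotient_mk' (s := lineSetoid k)).isClosed_preimage.1 ?_
      refine ((Set.finite_range fun j : Fin k => (j, p.2)).subset ?_).isClosed
      rintro q hq
      exact ⟨q.1, Prod.ext rfl (Quotient.exact hq).1.symm⟩

theorem exists_continuous_separating_origins {Y : Type*} [TopologicalSpace Y] [NormalSpace Y]
    {f : Y → LineK k} (hf : Continuous f) (i : Fin k) :
    ∃ u : C(Y, ℝ), (∀ y, f y = LineK.origin k i → u y = 1) ∧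
      ∀ y j, j ≠ i → f y = LineK.origin k j → u y = -1 := by
  have hdisj : Disjoint (f ⁻¹' {LineK.origin k i}) (f ⁻¹' (LineK.origin k '' {i}ᶜ)) := by
    refine Disjoint.preimage f (Set.disjoint_singleton_left.2 ?_)
    rintro ⟨j, hj, hji⟩
    exact hj (origin_injective hji)
  obtain ⟨v, hv₀, hv₁, -⟩ := exists_continuous_zero_one_of_isClosed
    (isClosed_singleton.preimage hf) (((Set.toFinite _).image _).isClosed.preimage hf) hdisj
  refine ⟨⟨fun y => 1 - 2 * v y, by fun_prop⟩, fun y hy => ?_, fun y j hj hy => ?_⟩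
  · have : v y = 0 := hv₀ (Set.mem_preimage.2 hy)
    simp [this]
  · have : v y = 1 := hv₁ (Set.mem_preimage.2 ⟨j, hj, hy.symm⟩)
    norm_num [this]

theorem exists_continuous_re_eq_proj {Y : Type*} [TopologicalSpace Y] [NormalSpace Y]
    {f : Y → LineK k} (hf : Continuous f) (i : Fin k) :
    ∃ Φ : C(Y, {z : ℂ // z ≠ 0}), (∀ y, (Φ y : ℂ).re = LineK.proj k (f y)) ∧
      (∀ y, f y = LineK.origin k i → (Φ y : ℂ) = Complex.I) ∧
      (∀ y j, j ≠ i → f y = LineK.origin k j → (Φ y : ℂ) = -Complex.I) ∧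
      ∀ y, LineK.proj k (f y) ^ 2 = 1 → (Φ y : ℂ) = LineK.proj k (f y) := by
  obtain ⟨u, hu_i, hu_j⟩ := exists_continuous_separating_origins hf i
  set w : Y → ℝ := fun y => u y * (1 - LineK.proj k (f y) ^ 2) with hw
  set φ : Y → ℂ := fun y => LineK.proj k (f y) + w y * Complex.I with hφ
  have hφ_i : ∀ y, f y = LineK.origin k i → φ y = Complex.I := fun y hy => by
    simp [hφ, hw, hy, hu_i y hy, LineK.origin]
  have hφ_j : ∀ y j, j ≠ i → f y = LineK.origin k j → φ y = -Complex.I := fun y j hj hy => by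
    simp [hφ, hw, hy, hu_j y j hj hy, LineK.origin]
  have hφ_ne : ∀ y, φ y ≠ 0 := by
    intro y hy
    obtain ⟨j, hj⟩ := proj_eq_zero_iff.1 (by simpa [hφ] using congrArg Complex.re hy)
    rcases eq_or_ne j i with rfl | hji
    · simp [hφ_i y hj] at hy
    · simp [hφ_j y j hji hj] at hy
  refine ⟨⟨fun y => ⟨φ y, hφ_ne y⟩, ?_⟩, fun y => by simp [hφ], hφ_i, hφ_j, fun y hy => ?_⟩
  · have := continuous_proj.comp hf
    fun_prop
  · have : w y = 0 := by simp [hw, hy]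
    simp [hφ, this]

def sheetPath (k : ℕ) (i : Fin k) : C(I, LineK k) :=
  ⟨fun t => LineK.mk k i (2 * t - 1), (continuous_mk i).comp (by fun_prop)⟩

@[simp]
theorem sheetPath_apply (i : Fin k) (t : I) : sheetPath k i t = LineK.mk k i (2 * t - 1) := rfl

theorem sheetPath_apply_eq_of_mem {t : I} (ht : t ∈ ({0, 1} : Set I)) (i j : Fin k) :
    sheetPath k i t = sheetPath k j t := by
  rcases ht with rfl | rfl <;> exact mk_eq_mk _ _ (by norm_num)

theorem sheetPath_eq_origin {i : Fin k} {t : I} (ht : LineK.proj k (sheetPath k i t) = 0) :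
    sheetPath k i t = LineK.origin k i := by
  simp only [sheetPath_apply, proj_mk] at ht ⊢
  rw [ht]
  rfl

theorem not_homotopicRel_sheetPath {i j : Fin k} (hij : i ≠ j) :
    ¬ (sheetPath k i).HomotopicRel (sheetPath k j) {0, 1} := by
  rintro ⟨F⟩
  obtain ⟨Φ, hΦ_re, hΦ_i, hΦ_j, hΦ_edge⟩ := exists_continuous_re_eq_proj F.continuous i
  have hedge : ∀ s, ∀ t ∈ ({0, 1} : Set I), (Φ (s, t) : ℂ) = 2 * t - 1 := by
    intro s t ht
    have hF : LineK.proj k (F (s, t)) = 2 * t - 1 := by simp [F.eq_fst s ht]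
    rw [hΦ_edge _ (by rcases ht with rfl | rfl <;> norm_num [hF])]
    exact_mod_cast hF
  refine Complex.not_homotopicRel_of_im_pos_of_im_neg (α := Φ.curry 0) (β := Φ.curry 1) ?_ ?_
    (fun t ht => ?_) (fun t ht => ?_) (Φ.homotopicRel_curry fun s t ht => ?_)
  · simpa using hedge 0 0 (by simp)
  · norm_num [hedge 0 1 (by simp)]
  · rw [ContinuousMap.curry_apply, hΦ_re, F.apply_zero] at ht
    simp [hΦ_i _ (F.apply_zero t ▸ sheetPath_eq_origin ht)]
  · rw [ContinuousMap.curry_apply, hΦ_re, F.apply_one] at ht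
    simp [hΦ_j _ j hij.symm (F.apply_one t ▸ sheetPath_eq_origin ht)]
  · exact Subtype.ext ((hedge s t ht).trans (hedge 0 t ht).symm)

end LineK

/-- For every integer `k ≥ 2`, `L_k^♯` is not contractible. -/
theorem stmt7 (k : ℕ) (hk : 2 ≤ k) :
    ¬ ContractibleSpace (LineK k) := by
  intro _
  let i₀ : Fin k := ⟨0, by omega⟩
  let i₁ : Fin k := ⟨1, by omega⟩
  have hpaths := SimplyConnectedSpace.paths_homotopic
    (⟨LineK.sheetPath k i₀, rfl, rfl⟩ : Path (LineK.sheetPath k i₀ 0) (LineK.sheetPath k i₀ 1))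
    ⟨LineK.sheetPath k i₁, LineK.sheetPath_apply_eq_of_mem (by simp) _ _,
      LineK.sheetPath_apply_eq_of_mem (by simp) _ _⟩
  exact LineK.not_homotopicRel_sheetPath (show i₀ ≠ i₁ by simp [i₀, i₁]) hpaths
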